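/- arXiv:1607.04797 — 4 statements merged into one kernel-verified Lean document; each statement's English description precedes it below -/
import Mathlib

section
/- Let d : ℝ → ℝ be continuous and positive, and fix ε > 0. If d is differentiable and for all ξ the bound -ε/d(ξ) ≤ d'(ξ)/d(ξ) ≤ ε/d(ξ) holds, then for all x, t ∈ ℝ: exp(-ε |∫_x^t dξ/d(ξ)|) ≤ d(t)/d(x) ≤ exp(ε |∫_x^t dξ/d(ξ)|). -/
theorem stmt_3 (d : ℝ → ℝ) (hc : Continuous d) (hpos : ∀ x, 0 < d x) (ε : ℝ) (hε : 0 < ε)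
    (hdiff : Differentiable ℝ d)
    (hbound : ∀ ξ, -ε / d ξ ≤ deriv d ξ / d ξ ∧ deriv d ξ / d ξ ≤ ε / d ξ) (x t : ℝ) :
    Real.exp (-ε * |∫ ξ in x..t, 1 / d ξ|) ≤ d t / d x ∧
      d t / d x ≤ Real.exp (ε * |∫ ξ in x..t, 1 / d ξ|) := by
  set h : ℝ → ℝ := fun ξ => deriv d ξ / d ξ with hh
  have habs : ∀ ξ, |h ξ| ≤ ε / d ξ := by
    intro ξ
    rw [abs_le]
    refine ⟨?_, (hbound ξ).2⟩
    have := (hbound ξ).1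
    rwa [neg_div] at this
  -- continuity of ε / d
  have hcd : Continuous fun ξ => ε / d ξ :=
    continuous_const.div hc (fun ξ => (hpos ξ).ne')
  -- interval integrability of h on any interval
  have hint : ∀ a b : ℝ, IntervalIntegrable h MeasureTheory.volume a b := by
    intro a b
    refine IntervalIntegrable.mono_fun' (hcd.intervalIntegrable a b) ?_ ?_
    · exact ((measurable_deriv d).div hc.measurable).aestronglyMeasurable
    · exact MeasureTheory.ae_of_all _ fun ξ => habs ξ
  -- fundamental theorem: log (d t) - log (d x) = ∫ h
  have hlog : ∀ a b : ℝ, Real.log (d b) - Real.log (d a) = ∫ ξ in a..b, h ξ := by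
    intro a b
    refine (intervalIntegral.integral_eq_sub_of_hasDerivAt (f := fun ξ => Real.log (d ξ)) (fun ξ _ => ?_) (hint a b)).symm
    exact ((hdiff ξ).hasDerivAt).log (hpos ξ).ne'
  have hone : ∀ a b : ℝ, IntervalIntegrable (fun ξ => 1 / d ξ) MeasureTheory.volume a b := by
    intro a b
    exact (continuous_const.div hc fun ξ => (hpos ξ).ne').intervalIntegrable a b
  -- key bound
  have key : |Real.log (d t) - Real.log (d x)| ≤ ε * |∫ ξ in x..t, 1 / d ξ| := by
    have hεd : ∀ a b : ℝ, a ≤ b →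
        (∫ ξ in a..b, |h ξ|) ≤ ε * |∫ ξ in a..b, 1 / d ξ| := by
      intro a b hab
      have h1 : (∫ ξ in a..b, |h ξ|) ≤ ∫ ξ in a..b, ε / d ξ := by
        refine intervalIntegral.integral_mono_on hab ((hint a b).abs) (hcd.intervalIntegrable a b)
          fun ξ _ => habs ξ
      have h2 : (∫ ξ in a..b, ε / d ξ) = ε * ∫ ξ in a..b, 1 / d ξ := by
        rw [← intervalIntegral.integral_const_mul]
        congr 1; ext ξ; field_simp
      have h3 : (0:ℝ) ≤ ∫ ξ in a..b, 1 / d ξ := by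
        refine intervalIntegral.integral_nonneg hab fun ξ _ => ?_
        exact one_div_nonneg.2 (hpos ξ).le
      rw [abs_of_nonneg h3, ← h2]; exact h1
    rw [hlog x t]
    calc |∫ ξ in x..t, h ξ| ≤ |(∫ ξ in x..t, |h ξ|)| := by
          simpa using intervalIntegral.norm_integral_le_abs_integral_norm (f := h) (a := x) (b := t) (μ := MeasureTheory.volume)
      _ ≤ ε * |∫ ξ in x..t, 1 / d ξ| := by
          rcases le_total x t with hxt | htx
          · rw [abs_of_nonneg (intervalIntegral.integral_nonneg hxt fun ξ _ => abs_nonneg _)]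
            exact hεd x t hxt
          · rw [intervalIntegral.integral_symm t x, abs_neg,
              abs_of_nonneg (intervalIntegral.integral_nonneg htx fun ξ _ => abs_nonneg _),
              intervalIntegral.integral_symm t x (f := fun ξ => 1 / d ξ), abs_neg]
            exact hεd t x htx
  have hratio : d t / d x = Real.exp (Real.log (d t) - Real.log (d x)) := by
    rw [Real.exp_sub, Real.exp_log (hpos t), Real.exp_log (hpos x)]
  rw [abs_le] at key
  constructor
  · rw [hratio]
    apply Real.exp_le_exp.2
    linarith [key.1]
  · rw [hratio]
    apply Real.exp_le_exp.2
    linarith [key.2]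
end

section
/- Let q : ℝ → ℝ be continuous, nonnegative, x₀ ∈ ℝ, and let z solve z'' = q z on (-∞, x₀] with z(x₀) = 1, z'(x₀) = 0. Then z'(x) ≤ 0 for all x ≤ x₀. -/
/-! If `z x ≤ 0` for some `x ≤ x₀`, let `a` be the last point of `[x, x₀]` with `z a ≤ 0`.
On `(a, x₀)` we have `z > 0`, hence `z'' = q z ≥ 0`, so `z'` increases up to `z'(x₀) ≤ 0`;
then `z` decreases on `[a, x₀]`, forcing `z a ≥ z x₀ > 0`, a contradiction.
So `z > 0` on `(-∞, x₀]`, and the same monotonicity of `z'` on all of `(-∞, x₀]` gives `z' ≤ 0` there. -/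

open Set

lemma le_of_deriv_nonneg_Ioo {g : ℝ → ℝ} (hg : Differentiable ℝ g) {a b x : ℝ}
    (hx : x ∈ Icc a b) (h : ∀ y ∈ Ioo a b, 0 ≤ deriv g y) : g x ≤ g b := by
  have hmono : MonotoneOn g (Icc a b) :=
    monotoneOn_of_deriv_nonneg (convex_Icc a b) hg.continuous.continuousOn
      hg.differentiableOn (by simpa only [interior_Icc] using h)
  exact hmono hx (right_mem_Icc.mpr (hx.1.trans hx.2)) hx.2

lemma le_of_deriv_nonpos_Ioo {g : ℝ → ℝ} (hg : Differentiable ℝ g) {a b : ℝ} (hab : a ≤ b)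
    (h : ∀ y ∈ Ioo a b, deriv g y ≤ 0) : g b ≤ g a := by
  have hanti : AntitoneOn g (Icc a b) :=
    antitoneOn_of_deriv_nonpos (convex_Icc a b) hg.continuous.continuousOn
      hg.differentiableOn (by simpa only [interior_Icc] using h)
  exact hanti (left_mem_Icc.mpr hab) (right_mem_Icc.mpr hab) hab

section

variable {q z : ℝ → ℝ} {x₀ : ℝ}

lemma pos_of_deriv_deriv_eq_mul (hz : Differentiable ℝ z) (hz' : Differentiable ℝ (deriv z))
    (hq : ∀ x ≤ x₀, 0 ≤ q x) (hode : ∀ x ≤ x₀, deriv (deriv z) x = q x * z x)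
    (hz0 : 0 < z x₀) (hz0' : deriv z x₀ ≤ 0) {x : ℝ} (hx : x ≤ x₀) : 0 < z x := by
  by_contra! hzx
  obtain ⟨a, ⟨⟨hxa, hax⟩, hza : z a ≤ 0⟩, ha_max⟩ : ∃ a, IsGreatest (Icc x x₀ ∩ {y | z y ≤ 0}) a :=
    (isCompact_Icc.inter_right (isClosed_le hz.continuous continuous_const)).exists_isGreatest
      ⟨x, ⟨left_mem_Icc.mpr hx, hzx⟩⟩
  have hpos : ∀ y ∈ Ioo a x₀, 0 < z y := fun y hy => by
    by_contra! hzy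
    exact (ha_max ⟨⟨hxa.trans hy.1.le, hy.2.le⟩, hzy⟩).not_gt hy.1
  have hz'_nonpos : ∀ y ∈ Ioo a x₀, deriv z y ≤ 0 := fun y hy =>
    (le_of_deriv_nonneg_Ioo hz' (Ioo_subset_Icc_self hy) fun t ht => by
      rw [hode t ht.2.le]; exact mul_nonneg (hq t ht.2.le) (hpos t ht).le).trans hz0'
  linarith [le_of_deriv_nonpos_Ioo hz hax hz'_nonpos]

end

theorem stmt_7_general (q : ℝ → ℝ) (hqnn : ∀ x, 0 ≤ q x) (x₀ : ℝ)
    (z : ℝ → ℝ) (hz : ContDiff ℝ 2 z)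
    (hode : ∀ x ≤ x₀, deriv (deriv z) x = q x * z x)
    (hz0 : z x₀ = 1) (hz0' : deriv z x₀ = 0) :
    ∀ x ≤ x₀, deriv z x ≤ 0 := by
  have hz' : Differentiable ℝ (deriv z) :=
    (hz.iterate_deriv' 1 1).differentiable one_ne_zero
  have hpos : ∀ x ≤ x₀, 0 < z x :=
    fun x => pos_of_deriv_deriv_eq_mul (hz.differentiable two_ne_zero) hz' (fun x _ => hqnn x)
      hode (by rw [hz0]; exact one_pos) hz0'.le
  intro x hx
  rw [← hz0']
  exact le_of_deriv_nonneg_Ioo hz' (left_mem_Icc.mpr hx) fun y hy => by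
    rw [hode y hy.2.le]; exact mul_nonneg (hqnn y) (hpos y hy.2.le).le

theorem stmt_7 (q : ℝ → ℝ) (hq : Continuous q) (hqnn : ∀ x, 0 ≤ q x) (x₀ : ℝ)
    (z : ℝ → ℝ) (hz : ContDiff ℝ 2 z)
    (hode : ∀ x ≤ x₀, deriv (deriv z) x = q x * z x)
    (hz0 : z x₀ = 1) (hz0' : deriv z x₀ = 0) :
    ∀ x ≤ x₀, deriv z x ≤ 0 :=
  stmt_7_general q hqnn x₀ z hz hode hz0 hz0'
end

section
/- There is a constant c > 0 such that for all x ≥ 1 and all α ≤ β with α, β ∈ [x - 2(1+x²)^{1/4}, x + 2(1+x²)^{1/4}], one has |∫_α^β cos(e^ξ)/√(1+ξ²) dξ| ≤ c e^{-x/2}/√(1+x²). -/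
/-!
Write the integrand as `g ξ * (sin ∘ exp)' ξ` with `g ξ = e^{-ξ} / √(1 + ξ²)`, which is
positive and decreasing. Integrating by parts, the boundary terms and the remaining integral
`∫ g' · sin(e^ξ)` are each controlled by values of `g`, so the whole integral is at most
`2 g(α) ≤ 2 e^{-α} ≤ 2 e^{2s - x}` with `s = (1 + x²)^{1/4}`. Since `x ≥ s² - 1`, the
exponent `2s - x` loses against `-x/2` up to a Gaussian factor `e^{2s - s²/2}`, which
absorbs the extra `s² = √(1 + x²)`.
-/

open Real Set intervalIntegral
open scoped Interval

/-- Integration-by-parts substitute for Bonnet's second mean value theorem. -/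
theorem abs_integral_mul_deriv_le_of_deriv_nonpos {a b M : ℝ} {g g' v v' : ℝ → ℝ}
    (hab : a ≤ b) (hg : ∀ x ∈ [[a, b]], HasDerivAt g (g' x) x)
    (hv : ∀ x ∈ [[a, b]], HasDerivAt v (v' x) x)
    (hg'int : IntervalIntegrable g' MeasureTheory.volume a b)
    (hv'int : IntervalIntegrable v' MeasureTheory.volume a b)
    (hg'_nonpos : ∀ x ∈ Icc a b, g' x ≤ 0) (hgb : 0 ≤ g b) (hvM : ∀ x ∈ Icc a b, |v x| ≤ M) :
    |∫ x in a..b, g x * v' x| ≤ 2 * M * g a := by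
  have hFTC : ∫ x in a..b, -g' x = g a - g b := by
    rw [intervalIntegral.integral_neg, integral_eq_sub_of_hasDerivAt hg hg'int, neg_sub]
  have hgba : g b ≤ g a := by
    have : 0 ≤ ∫ x in a..b, -g' x :=
      integral_nonneg hab fun x hx => neg_nonneg.mpr (hg'_nonpos x hx)
    linarith
  have hrem : |∫ x in a..b, g' x * v x| ≤ M * (g a - g b) := by
    rw [← Real.norm_eq_abs, ← hFTC, ← intervalIntegral.integral_const_mul M]
    refine norm_integral_le_of_norm_le hab (Filter.Eventually.of_forall fun x hx => ?_)
      (hg'int.neg.const_mul M)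
    have hx : x ∈ Icc a b := Ioc_subset_Icc_self hx
    rw [Real.norm_eq_abs, abs_mul, abs_of_nonpos (hg'_nonpos x hx), mul_comm]
    exact mul_le_mul_of_nonneg_right (hvM x hx) (neg_nonneg.mpr (hg'_nonpos x hx))
  have hboundary : ∀ x ∈ Icc a b, 0 ≤ g x → |g x * v x| ≤ M * g x := fun x hx hgx => by
    rw [abs_mul, abs_of_nonneg hgx, mul_comm]
    exact mul_le_mul_of_nonneg_right (hvM x hx) hgx
  have hb := hboundary b ⟨hab, le_rfl⟩ hgb
  have ha := hboundary a ⟨le_rfl, hab⟩ (hgb.trans hgba)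
  rw [integral_mul_deriv_eq_deriv_mul hg hv hg'int hv'int]
  calc |g b * v b - g a * v a - ∫ x in a..b, g' x * v x|
      ≤ |g b * v b| + |g a * v a| + |∫ x in a..b, g' x * v x| := by
        exact (abs_sub _ _).trans (add_le_add_left (abs_sub _ _) _)
    _ ≤ 2 * M * g a := by linarith

theorem hasDerivAt_exp_neg_div_sqrt_one_add_sq (ξ : ℝ) :
    HasDerivAt (fun ξ => exp (-ξ) / √(1 + ξ ^ 2))
      (-(exp (-ξ) * (1 + ξ + ξ ^ 2)) / (√(1 + ξ ^ 2) * (1 + ξ ^ 2))) ξ := by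
  have hpos : 0 < 1 + ξ ^ 2 := by positivity
  have hsqrt : HasDerivAt (fun ξ => √(1 + ξ ^ 2)) (2 * ξ / (2 * √(1 + ξ ^ 2))) ξ := by
    simpa using ((hasDerivAt_pow 2 ξ).const_add 1).sqrt hpos.ne'
  refine ((hasDerivAt_neg' ξ).exp.fun_div hsqrt (sqrt_pos.mpr hpos).ne').congr_deriv ?_
  field_simp
  rw [sq_sqrt hpos.le]
  ring

theorem abs_integral_cos_exp_div_sqrt_le {α β : ℝ} (hαβ : α ≤ β) :
    |∫ ξ in α..β, cos (exp ξ) / √(1 + ξ ^ 2)| ≤ 2 * exp (-α) := by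
  have hsin : ∀ ξ : ℝ, HasDerivAt (fun ξ => sin (exp ξ)) (exp ξ * cos (exp ξ)) ξ := fun ξ => by
    simpa [mul_comm] using (hasDerivAt_exp ξ).sin
  have hg'cont : Continuous fun ξ : ℝ =>
      -(exp (-ξ) * (1 + ξ + ξ ^ 2)) / (√(1 + ξ ^ 2) * (1 + ξ ^ 2)) :=
    (by fun_prop : Continuous _).div (by fun_prop) fun ξ => by positivity
  have hg'_nonpos (ξ : ℝ) : -(exp (-ξ) * (1 + ξ + ξ ^ 2)) / (√(1 + ξ ^ 2) * (1 + ξ ^ 2)) ≤ 0 := by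
    have : 0 ≤ 1 + ξ + ξ ^ 2 := by nlinarith [sq_nonneg (2 * ξ + 1)]
    exact div_nonpos_of_nonpos_of_nonneg (neg_nonpos.mpr (by positivity)) (by positivity)
  have hbound := abs_integral_mul_deriv_le_of_deriv_nonpos (M := 1) hαβ
    (fun ξ _ => hasDerivAt_exp_neg_div_sqrt_one_add_sq ξ) (fun ξ _ => hsin ξ)
    (hg'cont.intervalIntegrable α β) ((by fun_prop : Continuous _).intervalIntegrable α β)
    (fun ξ _ => hg'_nonpos ξ) (by positivity) (fun ξ _ => abs_sin_le_one _)
  have hintegrand : ∀ ξ : ℝ, cos (exp ξ) / √(1 + ξ ^ 2) =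
      exp (-ξ) / √(1 + ξ ^ 2) * (exp ξ * cos (exp ξ)) := fun ξ => by
    rw [exp_neg]; field_simp
  have hweight : exp (-α) / √(1 + α ^ 2) ≤ exp (-α) :=
    div_le_self (exp_pos _).le (one_le_sqrt.mpr (by nlinarith))
  simp only [hintegrand]
  linarith

theorem sq_mul_exp_two_mul_le {s : ℝ} (hs : 0 ≤ s) :
    s ^ 2 * exp (2 * s) ≤ 2 * exp 5 * exp ((s ^ 2 - 1) / 2) := by
  have hsq : s ^ 2 ≤ 2 * exp s := by nlinarith [quadratic_le_exp_of_nonneg hs]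
  calc s ^ 2 * exp (2 * s) ≤ 2 * exp s * exp (2 * s) := by gcongr
    _ = 2 * exp (3 * s) := by rw [mul_assoc, ← exp_add]; ring_nf
    _ ≤ 2 * exp (5 + (s ^ 2 - 1) / 2) := by gcongr; nlinarith [sq_nonneg (s - 3)]
    _ = 2 * exp 5 * exp ((s ^ 2 - 1) / 2) := by rw [exp_add, mul_assoc]

theorem exp_two_mul_rpow_sub_mul_sqrt_le {x : ℝ} (hx : 0 ≤ x) :
    exp (2 * (1 + x ^ 2) ^ ((1 : ℝ) / 4) - x) * √(1 + x ^ 2) ≤ 2 * exp 5 * exp (-x / 2) := by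
  set s := (1 + x ^ 2) ^ ((1 : ℝ) / 4) with hs_def
  have hs : 0 ≤ s := by positivity
  have hs4 : s ^ 4 = 1 + x ^ 2 := by
    rw [hs_def, ← rpow_natCast, ← rpow_mul (by positivity)]
    norm_num
  have hsqrt : √(1 + x ^ 2) = s ^ 2 := by
    rw [← hs4, show s ^ 4 = (s ^ 2) ^ 2 by ring, sqrt_sq (by positivity)]
  have hsx : s ^ 2 - 1 ≤ x := by nlinarith
  calc exp (2 * s - x) * √(1 + x ^ 2) = s ^ 2 * exp (2 * s) * exp (-x) := by
        rw [hsqrt, sub_eq_add_neg, exp_add]; ring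
    _ ≤ 2 * exp 5 * exp ((s ^ 2 - 1) / 2) * exp (-x) := by
        gcongr ?_ * _; exact sq_mul_exp_two_mul_le hs
    _ ≤ 2 * exp 5 * exp (x / 2) * exp (-x) := by gcongr
    _ = 2 * exp 5 * exp (-x / 2) := by rw [mul_assoc, ← exp_add]; ring_nf

theorem stmt_15 : ∃ c : ℝ, 0 < c ∧ ∀ x ≥ (1:ℝ), ∀ α β : ℝ, α ≤ β →
    α ∈ Set.Icc (x - 2 * (1 + x ^ 2) ^ ((1:ℝ)/4)) (x + 2 * (1 + x ^ 2) ^ ((1:ℝ)/4)) →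
    β ∈ Set.Icc (x - 2 * (1 + x ^ 2) ^ ((1:ℝ)/4)) (x + 2 * (1 + x ^ 2) ^ ((1:ℝ)/4)) →
    |∫ ξ in α..β, Real.cos (Real.exp ξ) / Real.sqrt (1 + ξ ^ 2)| ≤
      c * Real.exp (-x / 2) / Real.sqrt (1 + x ^ 2) := by
  refine ⟨4 * exp 5, by positivity, fun x hx α β hαβ hα _ => ?_⟩
  rw [le_div_iff₀ (sqrt_pos.mpr (by positivity))]
  have hwindow := exp_two_mul_rpow_sub_mul_sqrt_le (by linarith : (0 : ℝ) ≤ x)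
  calc |∫ ξ in α..β, cos (exp ξ) / √(1 + ξ ^ 2)| * √(1 + x ^ 2)
      ≤ 2 * exp (-α) * √(1 + x ^ 2) := by gcongr; exact abs_integral_cos_exp_div_sqrt_le hαβ
    _ ≤ 2 * exp (2 * (1 + x ^ 2) ^ ((1 : ℝ) / 4) - x) * √(1 + x ^ 2) := by
        gcongr; linarith [hα.1]
    _ ≤ 4 * exp 5 * exp (-x / 2) := by linarith
end

section
/- Let q : ℝ → [0,∞) be continuous with ∫_{-∞}^x q > 0, ∫_x^∞ q > 0 for all x, and let d(x) be the unique solution of ∫_0^{√2 d(x)} ∫_{x-t}^{x+t} q(ξ) dξ dt = 2. Then d is continuously differentiable and |d'(x)| ≤ 1/√2 for all x ∈ ℝ. -/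
/-!
Let `Q` be a primitive of `q` and `P` a primitive of `Q`. The inner integral is
`Q (x + t) - Q (x - t)`, so the defining equation says `secondDiff P x (√2 d x) = 2`, where
`secondDiff P x r = P (x + r) + P (x - r) - 2 P x`. As `Q` is monotone, `r ↦ secondDiff P x r` is
convex and vanishes at `0`, so it crosses the level `2` exactly once, with slope
`Q (x + r) - Q (x - r) ≥ 2 / r > 0` there. This makes `s = √2 d` continuous, and the implicit
function theorem then gives `s' = -(Q (x + s) + Q (x - s) - 2 Q x) / (Q (x + s) - Q (x - s))`, which lies in
`[-1, 1]` because `Q` is monotone.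
-/

open Set Filter Topology

open ContinuousLinearMap in
theorem HasStrictFDerivAt.hasDerivAt_of_apply_eq {𝕜 : Type*} [NontriviallyNormedField 𝕜]
    [CompleteSpace 𝕜] {F : 𝕜 × 𝕜 → 𝕜} {F' : 𝕜 × 𝕜 →L[𝕜] 𝕜} {s : 𝕜 → 𝕜} {x₀ : 𝕜}
    (hF : HasStrictFDerivAt F F' (x₀, s x₀)) (hF' : F' (0, 1) ≠ 0) (hs : ContinuousAt s x₀)
    (hFs : ∀ᶠ x in 𝓝 x₀, F (x, s x) = F (x₀, s x₀)) :
    HasDerivAt s (-F' (1, 0) / F' (0, 1)) x₀ := by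
  set e : 𝕜 ≃L[𝕜] 𝕜 := ContinuousLinearEquiv.unitsEquivAut 𝕜 (Units.mk0 _ hF')
  have he : (e : 𝕜 →L[𝕜] 𝕜) = F' ∘L inr 𝕜 𝕜 𝕜 := ext_ring (by simp [e])
  have hinv : (F' ∘L inr 𝕜 𝕜 𝕜).IsInvertible := ⟨e, he⟩
  have hψ := (hF.hasStrictFDerivAt_implicitFunctionOfProdDomain hinv).hasFDerivAt.hasDerivAt
  have hψs : ∀ᶠ x in 𝓝 x₀, hF.implicitFunctionOfProdDomain hinv x = s x := by
    have hgraph : Tendsto (fun x => (x, s x)) (𝓝 x₀) (𝓝 (x₀, s x₀)) :=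
      (continuousAt_id.prodMk hs).tendsto
    filter_upwards [hFs, hgraph.eventually
      (hF.eventually_apply_eq_iff_implicitFunctionOfProdDomain hinv)] with x hx hiff
    exact hiff.mp hx
  refine (hψ.congr_of_eventuallyEq (hψs.mono fun x hx => hx.symm)).congr_deriv ?_
  rw [← he, inverse_equiv]
  simp [e, div_eq_mul_inv]

theorem continuousAt_of_lt_of_gt {X : Type*} [TopologicalSpace X] {G : X → ℝ → ℝ} {s : X → ℝ}
    {c : ℝ} {x₀ : X} (hG : ∀ r, ContinuousAt (G · r) x₀) (hs₀ : 0 < s x₀)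
    (hGs : ∀ x, G x (s x) = c) (hlt : ∀ x, ∀ r ∈ Ioo 0 (s x), G x r < c)
    (hgt : ∀ x r, s x < r → c < G x r) : ContinuousAt s x₀ := by
  refine Metric.tendsto_nhds.mpr fun ε hε => ?_
  obtain ⟨δ, hδ, hδε, hδs⟩ : ∃ δ, 0 < δ ∧ δ < ε ∧ δ < s x₀ := by
    obtain ⟨δ, hδ, hδm⟩ := exists_between (lt_min hε hs₀)
    exact ⟨δ, hδ, lt_min_iff.mp hδm⟩
  have hbelow : G x₀ (s x₀ - δ) < c := hlt x₀ _ ⟨by linarith, by linarith⟩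
  have habove : c < G x₀ (s x₀ + δ) := hgt x₀ _ (by linarith)
  filter_upwards [(hG _).eventually (gt_mem_nhds hbelow), (hG _).eventually (lt_mem_nhds habove)]
    with x hx₁ hx₂
  have h₁ : s x₀ - δ < s x := by
    by_contra! h
    rcases h.lt_or_eq with h | h
    · exact (hgt x _ h).not_gt hx₁
    · exact hx₁.ne (h ▸ hGs x)
  have h₂ : s x < s x₀ + δ := by
    by_contra! h
    rcases h.lt_or_eq with h | h
    · exact (hlt x _ ⟨by linarith, h⟩).not_gt hx₂
    · exact hx₂.ne' (h ▸ hGs x)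
  rw [Real.dist_eq, abs_lt]
  constructor <;> linarith

namespace ConvexOn

variable {φ : ℝ → ℝ} {r₀ : ℝ}

theorem apply_lt_of_lt_of_apply_zero (hφ : ConvexOn ℝ (Ici 0) φ) (h0 : φ 0 = 0)
    (hr₀ : 0 < φ r₀) {r : ℝ} (hr : r ∈ Ioo 0 r₀) : φ r < φ r₀ := by
  by_contra! h
  have hmem : r ∈ openSegment ℝ 0 r₀ := by rwa [openSegment_eq_Ioo (hr.1.trans hr.2)]
  exact (hφ.lt_right_of_left_lt self_mem_Ici (hr.1.trans hr.2).le hmem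
    (by rw [h0]; exact hr₀.trans_le h)).not_ge h

theorem apply_lt_of_gt_of_apply_zero (hφ : ConvexOn ℝ (Ici 0) φ) (h0 : φ 0 = 0) (hr₀' : 0 < r₀)
    (hr₀ : 0 < φ r₀) {r : ℝ} (hr : r₀ < r) : φ r₀ < φ r := by
  have hmem : r₀ ∈ openSegment ℝ 0 r := by rw [openSegment_eq_Ioo (hr₀'.trans hr)]; exact ⟨hr₀', hr⟩
  exact hφ.lt_right_of_left_lt self_mem_Ici (hr₀'.trans hr).le hmem (by rwa [h0])

theorem div_le_of_hasDerivAt_of_apply_zero (hφ : ConvexOn ℝ (Ici 0) φ) (h0 : φ 0 = 0)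
    (hr₀ : 0 < r₀) {φ' : ℝ} (hφ' : HasDerivAt φ φ' r₀) : φ r₀ / r₀ ≤ φ' := by
  simpa [slope_def_field, h0] using hφ.slope_le_of_hasDerivAt self_mem_Ici hr₀.le hr₀ hφ'

end ConvexOn

def secondDiff (f : ℝ → ℝ) (x r : ℝ) : ℝ := f (x + r) + f (x - r) - 2 * f x

namespace secondDiff

variable {f f' : ℝ → ℝ}

theorem zero_right (f : ℝ → ℝ) (x : ℝ) : secondDiff f x 0 = 0 := by
  simp only [secondDiff, add_zero, sub_zero]
  ring

theorem abs_le (hf : Monotone f) (x : ℝ) {r : ℝ} (hr : 0 ≤ r) :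
    |secondDiff f x r| ≤ f (x + r) - f (x - r) := by
  have h₁ : f x ≤ f (x + r) := hf (by linarith)
  have h₂ : f (x - r) ≤ f x := hf (by linarith)
  rw [secondDiff, _root_.abs_le]
  constructor <;> linarith

theorem continuous_left (hf : Continuous f) (r : ℝ) : Continuous fun x => secondDiff f x r := by
  unfold secondDiff
  fun_prop

theorem hasDerivAt_right (hf : ∀ y, HasDerivAt f (f' y) y) (x r : ℝ) :
    HasDerivAt (secondDiff f x) (f' (x + r) - f' (x - r)) r :=
  (((hf (x + r)).comp_const_add x r).add ((hf (x - r)).comp_const_sub x r)).sub_const (2 * f x)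

theorem convexOn (hf : ∀ y, HasDerivAt f (f' y) y) (hf' : Monotone f') (x : ℝ) :
    ConvexOn ℝ univ (secondDiff f x) := by
  have hd := hasDerivAt_right hf x
  refine Monotone.convexOn_univ_of_deriv (fun r => (hd r).differentiableAt) fun a b hab => ?_
  rw [(hd a).deriv, (hd b).deriv]
  linarith [hf' (show x + a ≤ x + b by linarith), hf' (show x - b ≤ x - a by linarith)]

open ContinuousLinearMap in
theorem hasStrictFDerivAt (hf : ∀ y, HasStrictDerivAt f (f' y) y) (p : ℝ × ℝ) :
    HasStrictFDerivAt (fun p : ℝ × ℝ => secondDiff f p.1 p.2)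
      (f' (p.1 + p.2) • (fst ℝ ℝ ℝ + snd ℝ ℝ ℝ) + f' (p.1 - p.2) • (fst ℝ ℝ ℝ - snd ℝ ℝ ℝ)
        - (2 * f' p.1) • fst ℝ ℝ ℝ) p := by
  have hadd : HasStrictFDerivAt (fun p : ℝ × ℝ => p.1 + p.2) (fst ℝ ℝ ℝ + snd ℝ ℝ ℝ) p :=
    hasStrictFDerivAt_fst.add hasStrictFDerivAt_snd
  have hsub : HasStrictFDerivAt (fun p : ℝ × ℝ => p.1 - p.2) (fst ℝ ℝ ℝ - snd ℝ ℝ ℝ) p :=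
    hasStrictFDerivAt_fst.sub hasStrictFDerivAt_snd
  have h₁ := (hf (p.1 + p.2)).comp_hasStrictFDerivAt p hadd
  have h₂ := (hf (p.1 - p.2)).comp_hasStrictFDerivAt p hsub
  have h₃ := ((hf p.1).const_mul 2).comp_hasStrictFDerivAt p
    (hasStrictFDerivAt_fst (𝕜 := ℝ) (p := p))
  exact (h₁.add h₂).sub h₃

end secondDiff

section LevelSet

variable {P Q s : ℝ → ℝ} {c : ℝ}

theorem continuous_of_secondDiff_eq (hP : ∀ y, HasDerivAt P (Q y) y) (hQ : Monotone Q)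
    (hc : 0 < c) (hs : ∀ x, 0 < s x) (hPs : ∀ x, secondDiff P x (s x) = c) : Continuous s := by
  have hconv x := (secondDiff.convexOn hP hQ x).subset (subset_univ _) (convex_Ici 0)
  have hPc : Continuous P := continuous_iff_continuousAt.2 fun y => (hP y).continuousAt
  refine continuous_iff_continuousAt.2 fun x₀ => continuousAt_of_lt_of_gt
    (fun r => (secondDiff.continuous_left hPc r).continuousAt) (hs x₀) hPs (fun x r hr => ?_)
    (fun x r hr => ?_)
  · rw [← hPs x] at hc ⊢
    exact (hconv x).apply_lt_of_lt_of_apply_zero (secondDiff.zero_right P x) hc hr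
  · rw [← hPs x] at hc ⊢
    exact (hconv x).apply_lt_of_gt_of_apply_zero (secondDiff.zero_right P x) (hs x) hc hr

theorem sub_pos_of_secondDiff_eq (hP : ∀ y, HasDerivAt P (Q y) y) (hQ : Monotone Q)
    (hc : 0 < c) (hs : ∀ x, 0 < s x) (hPs : ∀ x, secondDiff P x (s x) = c) (x : ℝ) :
    0 < Q (x + s x) - Q (x - s x) := by
  have hconv := (secondDiff.convexOn hP hQ x).subset (subset_univ _) (convex_Ici 0)
  have hslope := hconv.div_le_of_hasDerivAt_of_apply_zero (secondDiff.zero_right P x) (hs x)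
    (secondDiff.hasDerivAt_right hP x (s x))
  rw [hPs x] at hslope
  exact (div_pos hc (hs x)).trans_le hslope

open ContinuousLinearMap in
theorem hasDerivAt_of_secondDiff_eq (hP : ∀ y, HasStrictDerivAt P (Q y) y) (hQ : Monotone Q)
    (hc : 0 < c) (hs : ∀ x, 0 < s x) (hPs : ∀ x, secondDiff P x (s x) = c) (x : ℝ) :
    HasDerivAt s (-secondDiff Q x (s x) / (Q (x + s x) - Q (x - s x))) x := by
  have hP' y := (hP y).hasDerivAt
  have hpos := sub_pos_of_secondDiff_eq hP' hQ hc hs hPs x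
  have h := (secondDiff.hasStrictFDerivAt hP (x, s x)).hasDerivAt_of_apply_eq
    (by simpa [sub_eq_add_neg] using hpos.ne')
    (continuous_of_secondDiff_eq hP' hQ hc hs hPs).continuousAt
    (Eventually.of_forall fun y => (hPs y).trans (hPs x).symm)
  refine h.congr_deriv ?_
  simp only [smul_add, sub_apply, add_apply, smul_apply, coe_fst', smul_eq_mul, mul_one, coe_snd',
    mul_zero, add_zero, sub_zero, neg_sub, zero_add, zero_sub, mul_neg, secondDiff]
  ring

theorem contDiff_one_and_abs_deriv_le_one_of_secondDiff_eq
    (hP : ∀ y, HasStrictDerivAt P (Q y) y) (hQ : Monotone Q) (hQc : Continuous Q) (hc : 0 < c)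
    (hs : ∀ x, 0 < s x) (hPs : ∀ x, secondDiff P x (s x) = c) :
    ContDiff ℝ 1 s ∧ ∀ x, |deriv s x| ≤ 1 := by
  have hP' y := (hP y).hasDerivAt
  have hderiv x := hasDerivAt_of_secondDiff_eq hP hQ hc hs hPs x
  have hpos := sub_pos_of_secondDiff_eq hP' hQ hc hs hPs
  have hsc := continuous_of_secondDiff_eq hP' hQ hc hs hPs
  refine ⟨contDiff_one_iff_deriv.2 ⟨fun x => (hderiv x).differentiableAt, ?_⟩, fun x => ?_⟩
  · rw [funext fun x => (hderiv x).deriv]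
    refine Continuous.div ?_ ?_ fun x => (hpos x).ne'
    · unfold secondDiff
      fun_prop
    · fun_prop
  · rw [(hderiv x).deriv, abs_div, abs_neg, abs_of_pos (hpos x), div_le_one (hpos x)]
    exact secondDiff.abs_le hQ x (hs x).le

end LevelSet

theorem integral_integral_eq_secondDiff {q Q P : ℝ → ℝ} (hq : Continuous q)
    (hQ : ∀ y, HasDerivAt Q (q y) y) (hP : ∀ y, HasDerivAt P (Q y) y) (x r : ℝ) :
    ∫ t in (0 : ℝ)..r, ∫ ξ in (x - t)..(x + t), q ξ = secondDiff P x r := by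
  have hinner t : ∫ ξ in (x - t)..(x + t), q ξ = Q (x + t) - Q (x - t) :=
    intervalIntegral.integral_eq_sub_of_hasDerivAt (fun y _ => hQ y) (hq.intervalIntegrable _ _)
  have hQc : Continuous Q := continuous_iff_continuousAt.2 fun y => (hQ y).continuousAt
  simp_rw [hinner]
  rw [intervalIntegral.integral_eq_sub_of_hasDerivAt
    (fun t _ => secondDiff.hasDerivAt_right hP x t)
    (by apply Continuous.intervalIntegrable; fun_prop), secondDiff.zero_right, sub_zero]

theorem stmt_19_general (q : ℝ → ℝ) (hqc : Continuous q) (hqnn : ∀ x, 0 ≤ q x)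
    (d : ℝ → ℝ) (hdpos : ∀ x, 0 < d x)
    (hd : ∀ x, (∫ t in (0:ℝ)..(Real.sqrt 2 * d x), ∫ ξ in (x - t)..(x + t), q ξ) = 2) :
    ContDiff ℝ 1 d ∧ ∀ x, |deriv d x| ≤ 1 / Real.sqrt 2 := by
  set Q := fun x => ∫ t in (0 : ℝ)..x, q t
  set P := fun x => ∫ t in (0 : ℝ)..x, Q t
  have hQ y : HasStrictDerivAt Q (q y) y := hqc.integral_hasStrictDerivAt 0 y
  have hQc : Continuous Q := continuous_iff_continuousAt.2 fun y => (hQ y).hasDerivAt.continuousAt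
  have hP y : HasStrictDerivAt P (Q y) y := hQc.integral_hasStrictDerivAt 0 y
  have hQm : Monotone Q := monotone_of_hasDerivAt_nonneg (fun y => (hQ y).hasDerivAt) hqnn
  have hsqrt : 0 < Real.sqrt 2 := by positivity
  have hPs x : secondDiff P x (Real.sqrt 2 * d x) = 2 :=
    (integral_integral_eq_secondDiff hqc (fun y => (hQ y).hasDerivAt)
      (fun y => (hP y).hasDerivAt) x _).symm.trans (hd x)
  obtain ⟨hs, hs'⟩ := contDiff_one_and_abs_deriv_le_one_of_secondDiff_eq hP hQm hQc two_pos
    (fun x => mul_pos hsqrt (hdpos x)) hPs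
  have hd_eq : d = fun x => Real.sqrt 2 * d x / Real.sqrt 2 := by
    funext x
    field_simp
  refine ⟨hd_eq ▸ hs.div_const _, fun x => ?_⟩
  rw [hd_eq, deriv_div_const, abs_div, abs_of_pos hsqrt]
  exact div_le_div_of_nonneg_right (hs' x) hsqrt.le

theorem stmt_19 (q : ℝ → ℝ) (hqc : Continuous q) (hqnn : ∀ x, 0 ≤ q x)
    (hleft : ∀ x : ℝ, 0 < ∫⁻ t in Set.Iic x, ENNReal.ofReal (q t))
    (hright : ∀ x : ℝ, 0 < ∫⁻ t in Set.Ici x, ENNReal.ofReal (q t))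
    (d : ℝ → ℝ) (hdpos : ∀ x, 0 < d x)
    (hd : ∀ x, (∫ t in (0:ℝ)..(Real.sqrt 2 * d x), ∫ ξ in (x - t)..(x + t), q ξ) = 2) :
    ContDiff ℝ 1 d ∧ ∀ x, |deriv d x| ≤ 1 / Real.sqrt 2 :=
  stmt_19_general q hqc hqnn d hdpos hd
end
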